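/- Let n ≥ 1, let ν be a Borel measure on ℝⁿ with ν({0}) = 0 and ∫_{ℝⁿ} min{1, ‖y‖²} dν(y) < ∞, let Q be an n×n real positive semidefinite symmetric matrix, let A be an n×n real matrix, and let b ∈ ℝⁿ. For f : ℝⁿ → ℝ bounded and twice continuously differentiable with bounded first and second derivatives, define (ℒf)(x) := (1/2)·tr(Q·D²f(x)) + ⟨Ax + b, Df(x)⟩ + ∫_{ℝⁿ} [ f(x+y) − f(x) − ⟨Df(x), y⟩·1_{{‖y‖≤1}}(y) ] dν(y), where the integral converges absolutely. Then for every Φ ∈ C²(ℝ) and every x ∈ ℝⁿ, the composition Φ∘f is again bounded C² with bounded derivatives and (ℒ(Φ∘f))(x) = Φ'(f(x))·(ℒf)(x) + (1/2)·Φ''(f(x))·⟨Q Df(x), Df(x)⟩ + ∫_{ℝⁿ} [ Φ(f(x+y)) − Φ(f(x)) − Φ'(f(x))·(f(x+y) − f(x)) ] dν(y), where this last integral also converges absolutely. Consequently, if μ is a Borel probability measure on ℝⁿ with ∫ ‖x‖ dμ(x) < ∞ and ∫_{ℝⁿ} ℒ(Φ∘f) dμ = 0, then ∫_{ℝⁿ}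 Φ'(f)·(ℒf) dμ = ∫_{ℝⁿ}∫_{ℝⁿ} [ Φ(f(x)) − Φ(f(x+y)) + Φ'(f(x))·(f(x+y) − f(x)) ] dν(y) dμ(x) − (1/2)∫_{ℝⁿ} Φ''(f)·⟨Q Df, Df⟩ dμ. -/

import Mathlib

open MeasureTheory ENNReal

/-- First partial derivative of `f` at `x` in the `i`-th coordinate direction. -/
noncomputable def pd (n : ℕ) (f : EuclideanSpace ℝ (Fin n) → ℝ)
    (x : EuclideanSpace ℝ (Fin n)) (i : Fin n) : ℝ :=
  fderiv ℝ f x (EuclideanSpace.single i 1)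

/-- Second partial derivative `∂_j ∂_i f (x)`. -/
noncomputable def pd2 (n : ℕ) (f : EuclideanSpace ℝ (Fin n) → ℝ)
    (x : EuclideanSpace ℝ (Fin n)) (i j : Fin n) : ℝ :=
  fderiv ℝ (fun z => fderiv ℝ f z (EuclideanSpace.single i 1)) x (EuclideanSpace.single j 1)

/-- The (pseudo-differential) operator
`(ℒf)(x) = (1/2) tr(Q D²f(x)) + ⟨Ax + b, Df(x)⟩ + ∫ [f(x+y) − f(x) − ⟨Df(x),y⟩ 1_{‖y‖≤1}] dν(y)`. -/
noncomputable def levyOp (n : ℕ) (ν : Measure (EuclideanSpace ℝ (Fin n)))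
    (Q A : Matrix (Fin n) (Fin n) ℝ) (b : EuclideanSpace ℝ (Fin n))
    (f : EuclideanSpace ℝ (Fin n) → ℝ) (x : EuclideanSpace ℝ (Fin n)) : ℝ :=
  (1 / 2) * (∑ i, ∑ j, Q i j * pd2 n f x j i)
    + (∑ i, ((∑ j, A i j * x j) + b i) * pd n f x i)
    + ∫ y, (f (x + y) - f x - (if ‖y‖ ≤ 1 then fderiv ℝ f x y else 0)) ∂ν

/-!
Each part of `ℒ` obeys the ordinary chain rule up to explicit remainders:
`D(Φ ∘ f) = Φ'(f) Df` and `D²(Φ ∘ f) = Φ'(f) D²f + Φ''(f) Df ⊗ Df` give the diffusion and drift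
terms, while the compensated jump integrand of `Φ ∘ f` is `Φ'(f x)` times that of `f` plus the
first-order Taylor remainder of `Φ` between `f x` and `f (x + y)`. Absolute convergence comes from
`|g (x + y) - g x - 1_{‖y‖ ≤ 1} Dg(x) y| ≤ (2 sup |g| + sup ‖D²g‖) min 1 ‖y‖²`.
For the invariance identity, integrate the chain rule against `μ`: every term is bounded and
continuous except the drift, which grows linearly and is integrable by the first moment of `μ`.
-/

open Set

section Calculus

variable {E F : Type*} [NormedAddCommGroup E] [NormedSpace ℝ E] [NormedAddCommGroup F]
  [NormedSpace ℝ F]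

def BoundedC2 (g : E → ℝ) : Prop :=
  ContDiff ℝ 2 g ∧ (∃ C, ∀ x, |g x| ≤ C) ∧ (∃ C, ∀ x, ‖fderiv ℝ g x‖ ≤ C) ∧
    (∃ C, ∀ x, ‖fderiv ℝ (fderiv ℝ g) x‖ ≤ C)

noncomputable def levyIntegrand (g : E → ℝ) (x y : E) : ℝ :=
  g (x + y) - g x - if ‖y‖ ≤ 1 then fderiv ℝ g x y else 0

noncomputable def chainRemainder (Φ : ℝ → ℝ) (f : E → ℝ) (x y : E) : ℝ :=
  Φ (f (x + y)) - Φ (f x) - deriv Φ (f x) * (f (x + y) - f x)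

theorem ContDiff.differentiable_fderiv_of_two {g : E → F} (hg : ContDiff ℝ 2 g) :
    Differentiable ℝ (fderiv ℝ g) :=
  (hg.fderiv_right (m := 1) (by norm_num)).differentiable one_ne_zero

theorem ContDiff.continuous_fderiv_fderiv_of_two {g : E → F} (hg : ContDiff ℝ 2 g) :
    Continuous (fderiv ℝ (fderiv ℝ g)) :=
  (hg.fderiv_right (m := 1) (by norm_num)).continuous_fderiv one_ne_zero

theorem norm_sub_sub_fderiv_le {h : E → F} (hd : Differentiable ℝ h)
    (hd2 : Differentiable ℝ (fderiv ℝ h)) {B : ℝ} (hB : ∀ z, ‖fderiv ℝ (fderiv ℝ h) z‖ ≤ B)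
    (x y : E) :
    ‖h (x + y) - h x - fderiv ℝ h x y‖ ≤ B * ‖y‖ ^ 2 := by
  have hB0 : 0 ≤ B := (norm_nonneg (fderiv ℝ (fderiv ℝ h) x)).trans (hB x)
  have hDh : ∀ z ∈ Metric.closedBall x ‖y‖, ‖fderiv ℝ h z - fderiv ℝ h x‖ ≤ B * ‖y‖ :=
    fun z hz => calc
      ‖fderiv ℝ h z - fderiv ℝ h x‖ ≤ B * ‖z - x‖ :=
        convex_univ.norm_image_sub_le_of_norm_fderiv_le (fun w _ => hd2 w) (fun w _ => hB w)
          (mem_univ x) (mem_univ z)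
      _ ≤ B * ‖y‖ := by gcongr; exact mem_closedBall_iff_norm.mp hz
  have hxy : x + y ∈ Metric.closedBall x ‖y‖ := by simp [Metric.mem_closedBall, dist_eq_norm]
  have := (convex_closedBall x ‖y‖).norm_image_sub_le_of_norm_fderiv_le' (fun z _ => hd z) hDh
    (Metric.mem_closedBall_self (norm_nonneg y)) hxy
  simpa [sq, mul_assoc] using this

theorem abs_levyIntegrand_le {h : E → ℝ} (hd : Differentiable ℝ h)
    (hd2 : Differentiable ℝ (fderiv ℝ h)) {B₀ B₂ : ℝ} (hB₀ : ∀ z, |h z| ≤ B₀)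
    (hB₂ : ∀ z, ‖fderiv ℝ (fderiv ℝ h) z‖ ≤ B₂) (x y : E) :
    |levyIntegrand h x y| ≤ (2 * B₀ + B₂) * min 1 (‖y‖ ^ 2) := by
  have hB₀0 : 0 ≤ B₀ := (abs_nonneg _).trans (hB₀ x)
  have hB₂0 : 0 ≤ B₂ := (norm_nonneg (fderiv ℝ (fderiv ℝ h) x)).trans (hB₂ x)
  unfold levyIntegrand
  split_ifs with hy
  · have htaylor := norm_sub_sub_fderiv_le hd hd2 hB₂ x y
    rw [Real.norm_eq_abs] at htaylor
    rw [min_eq_right (pow_le_one₀ (norm_nonneg y) hy)]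
    nlinarith [sq_nonneg ‖y‖]
  · rw [min_eq_left (one_le_pow₀ (le_of_not_ge hy)), mul_one, sub_zero]
    calc |h (x + y) - h x| ≤ |h (x + y)| + |h x| := abs_sub _ _
      _ ≤ 2 * B₀ + B₂ := by linarith [hB₀ (x + y), hB₀ x]

theorem BoundedC2.exists_abs_levyIntegrand_le {g : E → ℝ} (hg : BoundedC2 g) :
    ∃ M, ∀ x y, |levyIntegrand g x y| ≤ M * min 1 (‖y‖ ^ 2) := by
  obtain ⟨hc, ⟨B₀, hB₀⟩, -, ⟨B₂, hB₂⟩⟩ := hg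
  exact ⟨2 * B₀ + B₂, abs_levyIntegrand_le (hc.differentiable two_ne_zero)
    hc.differentiable_fderiv_of_two hB₀ hB₂⟩

theorem exists_abs_comp_le {α : Type*} {f : α → ℝ} {ψ : ℝ → ℝ} (hψ : Continuous ψ)
    (hf : ∃ C, ∀ x, |f x| ≤ C) : ∃ D, ∀ x, |ψ (f x)| ≤ D := by
  obtain ⟨C, hC⟩ := hf
  obtain ⟨D, hD⟩ := (isCompact_Icc (a := -C) (b := C)).exists_bound_of_continuousOn
    hψ.continuousOn
  exact ⟨D, fun x => hD (f x) (abs_le.mp (hC x))⟩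

theorem fderiv_comp_eq_deriv_smul {f : E → ℝ} {Φ : ℝ → ℝ} {x : E}
    (hf : DifferentiableAt ℝ f x) (hΦ : DifferentiableAt ℝ Φ (f x)) :
    fderiv ℝ (Φ ∘ f) x = deriv Φ (f x) • fderiv ℝ f x :=
  (hΦ.hasDerivAt.comp_hasFDerivAt x hf.hasFDerivAt).fderiv

theorem fderiv_fderiv_comp {f : E → ℝ} {Φ : ℝ → ℝ} (hf : Differentiable ℝ f)
    (hf2 : Differentiable ℝ (fderiv ℝ f)) (hΦ : Differentiable ℝ Φ)
    (hΦ2 : Differentiable ℝ (deriv Φ)) (x : E) :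
    fderiv ℝ (fderiv ℝ (Φ ∘ f)) x = deriv Φ (f x) • fderiv ℝ (fderiv ℝ f) x
      + (deriv (deriv Φ) (f x) • fderiv ℝ f x).smulRight (fderiv ℝ f x) := by
  have hD : fderiv ℝ (Φ ∘ f) = fun w => deriv Φ (f w) • fderiv ℝ f w :=
    funext fun w => fderiv_comp_eq_deriv_smul (hf w) (hΦ _)
  have hΦ'f : DifferentiableAt ℝ (fun w => deriv Φ (f w)) x := (hΦ2 _).comp x (hf x)
  rw [hD, fderiv_fun_smul hΦ'f (hf2 x), show (fun w => deriv Φ (f w)) = deriv Φ ∘ f from rfl,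
    fderiv_comp_eq_deriv_smul (hf x) (hΦ2 _)]

theorem levyIntegrand_comp {f : E → ℝ} {Φ : ℝ → ℝ} {x : E} (hf : DifferentiableAt ℝ f x)
    (hΦ : DifferentiableAt ℝ Φ (f x)) (y : E) :
    levyIntegrand (Φ ∘ f) x y
      = deriv Φ (f x) * levyIntegrand f x y + chainRemainder Φ f x y := by
  simp only [levyIntegrand, chainRemainder, fderiv_comp_eq_deriv_smul hf hΦ,
    smul_apply, smul_eq_mul, Function.comp_apply]
  split_ifs <;> ring

theorem BoundedC2.comp {f : E → ℝ} (hf : BoundedC2 f) {Φ : ℝ → ℝ} (hΦ : ContDiff ℝ 2 Φ) :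
    BoundedC2 (Φ ∘ f) := by
  obtain ⟨hc, hf₀, ⟨C₁, hC₁⟩, ⟨C₂, hC₂⟩⟩ := hf
  have hΦ' : ContDiff ℝ 1 (deriv Φ) := hΦ.deriv'
  obtain ⟨D₀, hD₀⟩ := exists_abs_comp_le hΦ.continuous hf₀
  obtain ⟨D₁, hD₁⟩ := exists_abs_comp_le hΦ'.continuous hf₀
  obtain ⟨D₂, hD₂⟩ := exists_abs_comp_le (hΦ'.continuous_deriv le_rfl) hf₀
  have hfd := hc.differentiable two_ne_zero
  have hΦd := hΦ.differentiable two_ne_zero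
  refine ⟨hΦ.comp hc, ⟨D₀, hD₀⟩, ⟨D₁ * C₁, fun x => ?_⟩, ⟨D₁ * C₂ + D₂ * C₁ * C₁, fun x => ?_⟩⟩
  · rw [fderiv_comp_eq_deriv_smul (hfd x) (hΦd _), norm_smul, Real.norm_eq_abs]
    exact mul_le_mul (hD₁ x) (hC₁ x) (norm_nonneg _) ((abs_nonneg _).trans (hD₁ x))
  · rw [fderiv_fderiv_comp hfd hc.differentiable_fderiv_of_two hΦd
      (hΦ'.differentiable one_ne_zero) x]
    refine (norm_add_le (E := E →L[ℝ] E →L[ℝ] ℝ) _ _).trans (add_le_add ?_ ?_)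
    · refine (ContinuousLinearMap.opNorm_smul_le _ _).trans ?_
      rw [Real.norm_eq_abs]
      exact mul_le_mul (hD₁ x) (hC₂ x) (norm_nonneg _) ((abs_nonneg _).trans (hD₁ x))
    · rw [ContinuousLinearMap.norm_smulRight_apply, norm_smul, Real.norm_eq_abs]
      have hD₂0 := (abs_nonneg _).trans (hD₂ x)
      have hC₁0 := (norm_nonneg _).trans (hC₁ x)
      gcongr
      exacts [hD₂ x, hC₁ x, hC₁ x]

end Calculus

theorem integrable_min_one_sq {E : Type*} [NormedAddCommGroup E] [MeasurableSpace E]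
    [OpensMeasurableSpace E] {ν : Measure E} (h : ∫⁻ y, ENNReal.ofReal (min 1 (‖y‖ ^ 2)) ∂ν < ⊤) :
    Integrable (fun y => min 1 (‖y‖ ^ 2)) ν :=
  ⟨(continuous_const.min (continuous_norm.pow 2)).aestronglyMeasurable,
    (hasFiniteIntegral_iff_ofReal (ae_of_all _ fun _ => le_min zero_le_one (by positivity))).mpr h⟩

section Integrability

variable {E : Type*} [NormedAddCommGroup E] [NormedSpace ℝ E] [MeasurableSpace E] {ν : Measure E}

theorem integrable_chainRemainder {f : E → ℝ} {Φ : ℝ → ℝ} {x : E}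
    (hf : DifferentiableAt ℝ f x) (hΦ : DifferentiableAt ℝ Φ (f x))
    (hf_int : Integrable (levyIntegrand f x) ν) (hΦf_int : Integrable (levyIntegrand (Φ ∘ f) x) ν) :
    Integrable (chainRemainder Φ f x) ν := by
  convert hΦf_int.sub (hf_int.const_mul (deriv Φ (f x))) using 1
  ext y
  rw [Pi.sub_apply, levyIntegrand_comp hf hΦ]
  ring

theorem integral_levyIntegrand_comp {f : E → ℝ} {Φ : ℝ → ℝ} {x : E}
    (hf : DifferentiableAt ℝ f x) (hΦ : DifferentiableAt ℝ Φ (f x))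
    (hf_int : Integrable (levyIntegrand f x) ν) (hΦf_int : Integrable (levyIntegrand (Φ ∘ f) x) ν) :
    ∫ y, levyIntegrand (Φ ∘ f) x y ∂ν
      = deriv Φ (f x) * ∫ y, levyIntegrand f x y ∂ν + ∫ y, chainRemainder Φ f x y ∂ν := by
  simp_rw [levyIntegrand_comp hf hΦ]
  rw [integral_add (hf_int.const_mul _) (integrable_chainRemainder hf hΦ hf_int hΦf_int),
    integral_const_mul]

variable [OpensMeasurableSpace E]

theorem measurable_levyIntegrand {g : E → ℝ} (hg : Continuous g) (x : E) :
    Measurable (levyIntegrand g x) :=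
  ((hg.comp (continuous_const.add continuous_id)).measurable.sub measurable_const).sub <|
    Measurable.ite (measurableSet_le measurable_norm measurable_const)
      (fderiv ℝ g x).continuous.measurable measurable_const

theorem BoundedC2.integrable_levyIntegrand {g : E → ℝ} (hg : BoundedC2 g)
    (hν : Integrable (fun y => min 1 (‖y‖ ^ 2)) ν) (x : E) :
    Integrable (levyIntegrand g x) ν := by
  obtain ⟨M, hM⟩ := hg.exists_abs_levyIntegrand_le
  exact (hν.const_mul M).mono' (measurable_levyIntegrand hg.1.continuous x).aestronglyMeasurable
    (ae_of_all _ fun y => hM x y)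

theorem BoundedC2.integrable_integral_levyIntegrand {g : E → ℝ} (hg : BoundedC2 g)
    (hν : Integrable (fun y => min 1 (‖y‖ ^ 2)) ν) (μ : Measure E) [IsFiniteMeasure μ] :
    Integrable (fun x => ∫ y, levyIntegrand g x y ∂ν) μ := by
  obtain ⟨M, hM⟩ := hg.exists_abs_levyIntegrand_le
  have hcont : Continuous fun x => ∫ y, levyIntegrand g x y ∂ν := by
    refine continuous_of_dominated
      (fun x => (measurable_levyIntegrand hg.1.continuous x).aestronglyMeasurable)
      (fun x => ae_of_all _ fun y => hM x y) (hν.const_mul M) (ae_of_all _ fun y => ?_)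
    exact ((hg.1.continuous.comp (continuous_id.add continuous_const)).sub hg.1.continuous).sub
      (.if_const _ ((ContinuousLinearMap.apply ℝ ℝ y).continuous.comp
        (hg.1.continuous_fderiv two_ne_zero)) continuous_const)
  refine .of_bound hcont.aestronglyMeasurable (M * ∫ y, min 1 (‖y‖ ^ 2) ∂ν)
    (ae_of_all _ fun x => ?_)
  rw [← integral_const_mul]
  exact norm_integral_le_of_norm_le (hν.const_mul M) (ae_of_all _ fun y => hM x y)

end Integrability

section Euclidean

variable {n : ℕ}

theorem levyOp_eq (ν : Measure (EuclideanSpace ℝ (Fin n))) (Q A : Matrix (Fin n) (Fin n) ℝ)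
    (b : EuclideanSpace ℝ (Fin n)) (g : EuclideanSpace ℝ (Fin n) → ℝ)
    (x : EuclideanSpace ℝ (Fin n)) :
    levyOp n ν Q A b g x = (1 / 2) * (∑ i, ∑ j, Q i j * pd2 n g x j i)
      + (∑ i, ((∑ j, A i j * x j) + b i) * pd n g x i) + ∫ y, levyIntegrand g x y ∂ν :=
  rfl

theorem abs_pd_le (h : EuclideanSpace ℝ (Fin n) → ℝ) (x : EuclideanSpace ℝ (Fin n)) (i : Fin n) :
    |pd n h x i| ≤ ‖fderiv ℝ h x‖ := by
  rw [pd, ← Real.norm_eq_abs]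
  simpa using (fderiv ℝ h x).le_opNorm (EuclideanSpace.single i 1)

theorem pd2_eq {h : EuclideanSpace ℝ (Fin n) → ℝ} {x : EuclideanSpace ℝ (Fin n)}
    (hd2 : DifferentiableAt ℝ (fderiv ℝ h) x) (i j : Fin n) :
    pd2 n h x i j
      = fderiv ℝ (fderiv ℝ h) x (EuclideanSpace.single j 1) (EuclideanSpace.single i 1) := by
  rw [pd2, fderiv_clm_apply hd2 (differentiableAt_const _)]
  simp

theorem abs_pd2_le {h : EuclideanSpace ℝ (Fin n) → ℝ} {x : EuclideanSpace ℝ (Fin n)}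
    (hd2 : DifferentiableAt ℝ (fderiv ℝ h) x) (i j : Fin n) :
    |pd2 n h x i j| ≤ ‖fderiv ℝ (fderiv ℝ h) x‖ := by
  rw [pd2_eq hd2, ← Real.norm_eq_abs]
  simpa using (fderiv ℝ (fderiv ℝ h) x).le_opNorm₂ (EuclideanSpace.single j 1)
    (EuclideanSpace.single i 1)

theorem continuous_pd {h : EuclideanSpace ℝ (Fin n) → ℝ} (hc : Continuous (fderiv ℝ h))
    (i : Fin n) : Continuous fun x => pd n h x i :=
  (ContinuousLinearMap.apply ℝ ℝ (EuclideanSpace.single i 1)).continuous.comp hc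

theorem continuous_pd2 {h : EuclideanSpace ℝ (Fin n) → ℝ} (hd2 : Differentiable ℝ (fderiv ℝ h))
    (hc2 : Continuous (fderiv ℝ (fderiv ℝ h))) (i j : Fin n) :
    Continuous fun x => pd2 n h x i j := by
  simp_rw [pd2_eq (hd2 _)]
  exact (ContinuousLinearMap.apply ℝ ℝ (EuclideanSpace.single i 1)).continuous.comp
    ((ContinuousLinearMap.apply ℝ _ (EuclideanSpace.single j 1)).continuous.comp hc2)

theorem pd_comp {f : EuclideanSpace ℝ (Fin n) → ℝ} {Φ : ℝ → ℝ} {x : EuclideanSpace ℝ (Fin n)}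
    (hf : DifferentiableAt ℝ f x) (hΦ : DifferentiableAt ℝ Φ (f x)) (i : Fin n) :
    pd n (Φ ∘ f) x i = deriv Φ (f x) * pd n f x i := by
  rw [pd, fderiv_comp_eq_deriv_smul hf hΦ, smul_apply, smul_eq_mul, pd]

theorem pd2_comp {f : EuclideanSpace ℝ (Fin n) → ℝ} {Φ : ℝ → ℝ} (hf : Differentiable ℝ f)
    (hf2 : Differentiable ℝ (fderiv ℝ f)) (hΦ : Differentiable ℝ Φ)
    (hΦ2 : Differentiable ℝ (deriv Φ)) (x : EuclideanSpace ℝ (Fin n)) (i j : Fin n) :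
    pd2 n (Φ ∘ f) x i j
      = deriv Φ (f x) * pd2 n f x i j + deriv (deriv Φ) (f x) * pd n f x j * pd n f x i := by
  have hd2 : Differentiable ℝ (fderiv ℝ (Φ ∘ f)) := by
    simp_rw [funext fun w => fderiv_comp_eq_deriv_smul (hf w) (hΦ (f w))]
    exact fun w => ((hΦ2 _).comp w (hf w)).smul (hf2 w)
  rw [pd2_eq (hd2 x), fderiv_fderiv_comp hf hf2 hΦ hΦ2, pd2_eq (hf2 x), pd, pd]
  simp only [add_apply, smul_apply, smul_eq_mul, ContinuousLinearMap.smulRight_apply]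

theorem levyOp_comp (ν : Measure (EuclideanSpace ℝ (Fin n))) (Q A : Matrix (Fin n) (Fin n) ℝ)
    (b : EuclideanSpace ℝ (Fin n)) {f : EuclideanSpace ℝ (Fin n) → ℝ} {Φ : ℝ → ℝ}
    (hf : Differentiable ℝ f) (hf2 : Differentiable ℝ (fderiv ℝ f)) (hΦ : Differentiable ℝ Φ)
    (hΦ2 : Differentiable ℝ (deriv Φ)) {x : EuclideanSpace ℝ (Fin n)}
    (hf_int : Integrable (levyIntegrand f x) ν) (hΦf_int : Integrable (levyIntegrand (Φ ∘ f) x) ν) :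
    levyOp n ν Q A b (Φ ∘ f) x
      = deriv Φ (f x) * levyOp n ν Q A b f x
        + (1 / 2) * deriv (deriv Φ) (f x) * (∑ i, ∑ j, Q i j * pd n f x j * pd n f x i)
        + ∫ y, chainRemainder Φ f x y ∂ν := by
  have hdiffusion : ∑ i, ∑ j, Q i j * pd2 n (Φ ∘ f) x j i
      = deriv Φ (f x) * ∑ i, ∑ j, Q i j * pd2 n f x j i
        + deriv (deriv Φ) (f x) * ∑ i, ∑ j, Q i j * pd n f x j * pd n f x i := by
    simp only [pd2_comp hf hf2 hΦ hΦ2, Finset.mul_sum, ← Finset.sum_add_distrib]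
    exact Finset.sum_congr rfl fun i _ => Finset.sum_congr rfl fun j _ => by ring
  have hdrift : ∑ i, ((∑ j, A i j * x j) + b i) * pd n (Φ ∘ f) x i
      = deriv Φ (f x) * ∑ i, ((∑ j, A i j * x j) + b i) * pd n f x i := by
    simp only [pd_comp (hf x) (hΦ (f x)), Finset.mul_sum]
    exact Finset.sum_congr rfl fun i _ => by ring
  rw [levyOp_eq, levyOp_eq, hdiffusion, hdrift,
    integral_levyIntegrand_comp (hf x) (hΦ (f x)) hf_int hΦf_int]
  ring

variable (μ : Measure (EuclideanSpace ℝ (Fin n))) {g : EuclideanSpace ℝ (Fin n) → ℝ}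

theorem BoundedC2.exists_abs_pd_le (hg : BoundedC2 g) : ∃ C, ∀ x i, |pd n g x i| ≤ C := by
  obtain ⟨-, -, ⟨C, hC⟩, -⟩ := hg
  exact ⟨C, fun x i => (abs_pd_le g x i).trans (hC x)⟩

theorem BoundedC2.integrable_mul_pd (hg : BoundedC2 g) {u : EuclideanSpace ℝ (Fin n) → ℝ}
    (hu : Integrable u μ) (i : Fin n) : Integrable (fun x => u x * pd n g x i) μ := by
  obtain ⟨C, hC⟩ := hg.exists_abs_pd_le
  exact hu.mul_bdd (continuous_pd (hg.1.continuous_fderiv two_ne_zero) i).aestronglyMeasurable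
    (ae_of_all _ fun x => hC x i)

theorem BoundedC2.integrable_pd2 [IsFiniteMeasure μ] (hg : BoundedC2 g) (i j : Fin n) :
    Integrable (fun x => pd2 n g x i j) μ := by
  obtain ⟨hc, -, -, ⟨C, hC⟩⟩ := hg
  exact .of_bound (continuous_pd2 hc.differentiable_fderiv_of_two
    hc.continuous_fderiv_fderiv_of_two i j).aestronglyMeasurable C
    (ae_of_all _ fun x => (abs_pd2_le (hc.differentiable_fderiv_of_two x) i j).trans (hC x))

theorem BoundedC2.integrable_levyOp [IsFiniteMeasure μ] (hg : BoundedC2 g)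
    (ν : Measure (EuclideanSpace ℝ (Fin n))) (hν : Integrable (fun y => min 1 (‖y‖ ^ 2)) ν)
    (Q A : Matrix (Fin n) (Fin n) ℝ) (b : EuclideanSpace ℝ (Fin n)) (hμ : Integrable id μ) :
    Integrable (levyOp n ν Q A b g) μ := by
  have hcoord : ∀ j : Fin n, Integrable (fun x : EuclideanSpace ℝ (Fin n) => x j) μ :=
    fun j => (EuclideanSpace.proj (𝕜 := ℝ) j).integrable_comp hμ
  have hdiffusion : Integrable (fun x => (1 / 2) * ∑ i, ∑ j, Q i j * pd2 n g x j i) μ :=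
    .const_mul (integrable_finsetSum _ fun i _ => integrable_finsetSum _ fun j _ =>
      (hg.integrable_pd2 μ j i).const_mul _) _
  have hdrift : Integrable (fun x => ∑ i, ((∑ j, A i j * x j) + b i) * pd n g x i) μ :=
    integrable_finsetSum _ fun i _ => hg.integrable_mul_pd μ
      ((integrable_finsetSum _ fun j _ => (hcoord j).const_mul _).add (integrable_const _)) i
  exact (hdiffusion.add hdrift).add (hg.integrable_integral_levyIntegrand hν μ)

theorem integral_deriv_mul_levyOp_eq_of_integral_levyOp_comp_eq_zero
    (ν : Measure (EuclideanSpace ℝ (Fin n))) (hν : Integrable (fun y => min 1 (‖y‖ ^ 2)) ν)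
    (Q A : Matrix (Fin n) (Fin n) ℝ) (b : EuclideanSpace ℝ (Fin n))
    {f : EuclideanSpace ℝ (Fin n) → ℝ} (hf : BoundedC2 f) {Φ : ℝ → ℝ} (hΦ : ContDiff ℝ 2 Φ)
    [IsFiniteMeasure μ] (hμ : Integrable id μ)
    (hinv : ∫ x, levyOp n ν Q A b (Φ ∘ f) x ∂μ = 0) :
    ∫ x, deriv Φ (f x) * levyOp n ν Q A b f x ∂μ
      = (∫ x, ∫ y, (Φ (f x) - Φ (f (x + y)) + deriv Φ (f x) * (f (x + y) - f x)) ∂ν ∂μ)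
        - (1 / 2) * ∫ x, deriv (deriv Φ) (f x) *
            (∑ i, ∑ j, Q i j * pd n f x j * pd n f x i) ∂μ := by
  have hfd := hf.1.differentiable two_ne_zero
  have hΦd := hΦ.differentiable two_ne_zero
  have hΦ' : ContDiff ℝ 1 (deriv Φ) := hΦ.deriv'
  have hg := hf.comp hΦ
  have hchain (x) := levyOp_comp ν Q A b hfd hf.1.differentiable_fderiv_of_two hΦd
    (hΦ'.differentiable one_ne_zero) (hf.integrable_levyIntegrand hν x)
    (hg.integrable_levyIntegrand hν x)
  have hremainder (x) : ∫ y, chainRemainder Φ f x y ∂ν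
      = ∫ y, levyIntegrand (Φ ∘ f) x y ∂ν - deriv Φ (f x) * ∫ y, levyIntegrand f x y ∂ν := by
    rw [integral_levyIntegrand_comp (hfd x) (hΦd _) (hf.integrable_levyIntegrand hν x)
      (hg.integrable_levyIntegrand hν x)]
    ring
  have hremainder_int : Integrable (fun x => ∫ y, chainRemainder Φ f x y ∂ν) μ := by
    simp_rw [hremainder]
    obtain ⟨D, hD⟩ := exists_abs_comp_le hΦ'.continuous hf.2.1
    exact (hg.integrable_integral_levyIntegrand hν μ).sub
      ((hf.integrable_integral_levyIntegrand hν μ).bdd_mul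
        (hΦ'.continuous.comp hf.1.continuous).aestronglyMeasurable (ae_of_all _ hD))
  have hquad_int : Integrable (fun x => deriv (deriv Φ) (f x) *
      ∑ i, ∑ j, Q i j * pd n f x j * pd n f x i) μ := by
    obtain ⟨D, hD⟩ := exists_abs_comp_le (hΦ'.continuous_deriv le_rfl) hf.2.1
    obtain ⟨C, hC⟩ := hf.exists_abs_pd_le
    have hpd_int (j) : Integrable (fun x => pd n f x j) μ :=
      .of_bound (continuous_pd (hf.1.continuous_fderiv two_ne_zero) j).aestronglyMeasurable C
        (ae_of_all _ fun x => hC x j)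
    exact (integrable_finsetSum _ fun i _ => integrable_finsetSum _ fun j _ =>
      hf.integrable_mul_pd μ ((hpd_int j).const_mul (Q i j)) i).bdd_mul
        ((hΦ'.continuous_deriv le_rfl).comp hf.1.continuous).aestronglyMeasurable
        (ae_of_all _ hD)
  have hL_int := hg.integrable_levyOp μ ν hν Q A b hμ
  have hLq_int : Integrable (fun x => levyOp n ν Q A b (Φ ∘ f) x - (1 / 2) *
      (deriv (deriv Φ) (f x) * ∑ i, ∑ j, Q i j * pd n f x j * pd n f x i)) μ :=
    hL_int.sub (hquad_int.const_mul _)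
  calc ∫ x, deriv Φ (f x) * levyOp n ν Q A b f x ∂μ
      = ∫ x, levyOp n ν Q A b (Φ ∘ f) x
          - (1 / 2) * (deriv (deriv Φ) (f x) * ∑ i, ∑ j, Q i j * pd n f x j * pd n f x i)
          - ∫ y, chainRemainder Φ f x y ∂ν ∂μ := by
        congr 1 with x
        rw [hchain x]
        ring
    _ = -(∫ x, ∫ y, chainRemainder Φ f x y ∂ν ∂μ) - (1 / 2) * ∫ x, deriv (deriv Φ) (f x) *
            (∑ i, ∑ j, Q i j * pd n f x j * pd n f x i) ∂μ := by
      rw [integral_sub hLq_int hremainder_int,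
        integral_sub hL_int (hquad_int.const_mul _), integral_const_mul, hinv]
      ring
    _ = _ := by
      rw [← integral_neg]
      congr 2 with x
      rw [← integral_neg]
      congr 1 with y
      rw [chainRemainder]
      ring

end Euclidean

theorem levyOp_comp_and_invariance_general (n : ℕ)
    (ν : Measure (EuclideanSpace ℝ (Fin n)))
    (hνint : ∫⁻ y, ENNReal.ofReal (min 1 (‖y‖ ^ 2)) ∂ν < ⊤)
    (Q A : Matrix (Fin n) (Fin n) ℝ)
    (b : EuclideanSpace ℝ (Fin n))
    (f : EuclideanSpace ℝ (Fin n) → ℝ) (hf : ContDiff ℝ 2 f)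
    (Cf : ℝ) (hfb : ∀ x, |f x| ≤ Cf)
    (C₁ : ℝ) (hf₁ : ∀ x, ‖fderiv ℝ f x‖ ≤ C₁)
    (C₂ : ℝ) (hf₂ : ∀ x, ‖fderiv ℝ (fderiv ℝ f) x‖ ≤ C₂)
    (Φ : ℝ → ℝ) (hΦ : ContDiff ℝ 2 Φ) :
    -- (a) `Φ ∘ f` is again bounded and `C²` with bounded derivatives
    (ContDiff ℝ 2 (Φ ∘ f) ∧
      (∃ C, ∀ x, |(Φ ∘ f) x| ≤ C) ∧
      (∃ C, ∀ x, ‖fderiv ℝ (Φ ∘ f) x‖ ≤ C) ∧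
      (∃ C, ∀ x, ‖fderiv ℝ (fderiv ℝ (Φ ∘ f)) x‖ ≤ C)) ∧
    -- (b) the chain rule formula, all integrals converging absolutely
    (∀ x, Integrable
        (fun y => f (x + y) - f x - (if ‖y‖ ≤ 1 then fderiv ℝ f x y else 0)) ν ∧
      Integrable
        (fun y => (Φ ∘ f) (x + y) - (Φ ∘ f) x -
          (if ‖y‖ ≤ 1 then fderiv ℝ (Φ ∘ f) x y else 0)) ν ∧
      Integrable
        (fun y => Φ (f (x + y)) - Φ (f x) - deriv Φ (f x) * (f (x + y) - f x)) ν ∧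
      levyOp n ν Q A b (Φ ∘ f) x
        = deriv Φ (f x) * levyOp n ν Q A b f x
          + (1 / 2) * deriv (deriv Φ) (f x) *
              (∑ i, ∑ j, Q i j * pd n f x j * pd n f x i)
          + ∫ y, (Φ (f (x + y)) - Φ (f x) - deriv Φ (f x) * (f (x + y) - f x)) ∂ν) ∧
    -- (c) the consequence for an invariant probability measure
    (∀ μ : Measure (EuclideanSpace ℝ (Fin n)), IsProbabilityMeasure μ →
      (∫⁻ x, ENNReal.ofReal ‖x‖ ∂μ) < ⊤ →
      (∫ x, levyOp n ν Q A b (Φ ∘ f) x ∂μ = 0) →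
      ∫ x, deriv Φ (f x) * levyOp n ν Q A b f x ∂μ
        = (∫ x, ∫ y,
              (Φ (f x) - Φ (f (x + y)) + deriv Φ (f x) * (f (x + y) - f x)) ∂ν ∂μ)
          - (1 / 2) * ∫ x, deriv (deriv Φ) (f x) *
              (∑ i, ∑ j, Q i j * pd n f x j * pd n f x i) ∂μ) := by
  have hfB : BoundedC2 f := ⟨hf, ⟨Cf, hfb⟩, ⟨C₁, hf₁⟩, ⟨C₂, hf₂⟩⟩
  have hν := integrable_min_one_sq hνint
  have hf_int := hfB.integrable_levyIntegrand hν
  have hg_int := (hfB.comp hΦ).integrable_levyIntegrand hν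
  have hfd := hf.differentiable two_ne_zero
  have hΦd := hΦ.differentiable two_ne_zero
  have hΦ' : ContDiff ℝ 1 (deriv Φ) := hΦ.deriv'
  refine ⟨hfB.comp hΦ, fun x => ⟨hf_int x, hg_int x,
    integrable_chainRemainder (hfd x) (hΦd _) (hf_int x) (hg_int x),
    levyOp_comp ν Q A b hfd hf.differentiable_fderiv_of_two hΦd (hΦ'.differentiable one_ne_zero)
      (hf_int x) (hg_int x)⟩, fun μ _ hμ hinv => ?_⟩
  exact integral_deriv_mul_levyOp_eq_of_integral_levyOp_comp_eq_zero μ ν hν Q A b hfB hΦ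
    ⟨aestronglyMeasurable_id, (hasFiniteIntegral_iff_norm _).mpr hμ⟩ hinv

/-- Chain rule for the Lévy-type operator `ℒ`, and the resulting integration-by-parts
identity with respect to a probability measure `μ` satisfying `∫ ℒ(Φ∘f) dμ = 0`. -/
theorem levyOp_comp_and_invariance (n : ℕ) (hn : 1 ≤ n)
    (ν : Measure (EuclideanSpace ℝ (Fin n)))
    (hν0 : ν {0} = 0)
    (hνint : ∫⁻ y, ENNReal.ofReal (min 1 (‖y‖ ^ 2)) ∂ν < ⊤)
    (Q A : Matrix (Fin n) (Fin n) ℝ) (hQ : Q.PosSemidef)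
    (b : EuclideanSpace ℝ (Fin n))
    (f : EuclideanSpace ℝ (Fin n) → ℝ) (hf : ContDiff ℝ 2 f)
    (Cf : ℝ) (hfb : ∀ x, |f x| ≤ Cf)
    (C₁ : ℝ) (hf₁ : ∀ x, ‖fderiv ℝ f x‖ ≤ C₁)
    (C₂ : ℝ) (hf₂ : ∀ x, ‖fderiv ℝ (fderiv ℝ f) x‖ ≤ C₂)
    (Φ : ℝ → ℝ) (hΦ : ContDiff ℝ 2 Φ) :
    -- (a) `Φ ∘ f` is again bounded and `C²` with bounded derivatives
    (ContDiff ℝ 2 (Φ ∘ f) ∧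
      (∃ C, ∀ x, |(Φ ∘ f) x| ≤ C) ∧
      (∃ C, ∀ x, ‖fderiv ℝ (Φ ∘ f) x‖ ≤ C) ∧
      (∃ C, ∀ x, ‖fderiv ℝ (fderiv ℝ (Φ ∘ f)) x‖ ≤ C)) ∧
    -- (b) the chain rule formula, all integrals converging absolutely
    (∀ x, Integrable
        (fun y => f (x + y) - f x - (if ‖y‖ ≤ 1 then fderiv ℝ f x y else 0)) ν ∧
      Integrable
        (fun y => (Φ ∘ f) (x + y) - (Φ ∘ f) x -
          (if ‖y‖ ≤ 1 then fderiv ℝ (Φ ∘ f) x y else 0)) ν ∧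
      Integrable
        (fun y => Φ (f (x + y)) - Φ (f x) - deriv Φ (f x) * (f (x + y) - f x)) ν ∧
      levyOp n ν Q A b (Φ ∘ f) x
        = deriv Φ (f x) * levyOp n ν Q A b f x
          + (1 / 2) * deriv (deriv Φ) (f x) *
              (∑ i, ∑ j, Q i j * pd n f x j * pd n f x i)
          + ∫ y, (Φ (f (x + y)) - Φ (f x) - deriv Φ (f x) * (f (x + y) - f x)) ∂ν) ∧
    -- (c) the consequence for an invariant probability measure
    (∀ μ : Measure (EuclideanSpace ℝ (Fin n)), IsProbabilityMeasure μ →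
      (∫⁻ x, ENNReal.ofReal ‖x‖ ∂μ) < ⊤ →
      (∫ x, levyOp n ν Q A b (Φ ∘ f) x ∂μ = 0) →
      ∫ x, deriv Φ (f x) * levyOp n ν Q A b f x ∂μ
        = (∫ x, ∫ y,
              (Φ (f x) - Φ (f (x + y)) + deriv Φ (f x) * (f (x + y) - f x)) ∂ν ∂μ)
          - (1 / 2) * ∫ x, deriv (deriv Φ) (f x) *
              (∑ i, ∑ j, Q i j * pd n f x j * pd n f x i) ∂μ) :=
  levyOp_comp_and_invariance_general n ν hνint Q A b f hf Cf hfb C₁ hf₁ C₂ hf₂ Φ hΦ
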